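/- arXiv:gr-qc/0302098 — 3 statements merged into one kernel-verified Lean document; each statement's English description precedes it below -/
import Mathlib

section
/- Let Ω : (0,b] → ℝ be C³ with Ω > 0 on (0,b], Ω continuous on [0,b] with Ω(0)=0, and suppose L(T) = Ω''(T)Ω(T)/(Ω'(T))² has a limit λ ≠ 1 as T → 0⁺ (with Ω' ≠ 0 near 0). If k : ℝ → ℝ is C³ and we set Ω̃(T) = e^(k(T))·Ω(T), then Ω̃(0)=0, Ω̃ is continuous on [0,b] and C³ on (0,b], Ω̃ > 0 on (0,b], and L̃(T) = Ω̃''(T)Ω̃(T)/(Ω̃'(T))² also tends to λ as T → 0⁺. -/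
/-!
Write `g = Ω / Ω'`. Its derivative is `1 - L`, which converges, so `g` is Lipschitz near `0⁺` and
has a limit `c`. If `c ≠ 0`, then `(log Ω)' = 1 / g` converges as well, so `log Ω` has a finite
limit, which is impossible because `Ω → 0⁺`; hence `Ω / Ω' → 0` (Scott). For `Ω̃ = h Ω` the product
rule gives `L̃ = (h h'' g² + 2 h h' g + h² L) / (h' g + h)²`, which tends to `h(0)² λ / h(0)² = λ`
whenever `h` is `C²` with `h(0) ≠ 0`, e.g. `h = exp ∘ k`.
-/

open Real Filter Set Topology

theorem exists_tendsto_nhdsGT_of_hasDerivAt {f f' : ℝ → ℝ} {a μ : ℝ}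
    (hf : ∀ᶠ x in 𝓝[>] a, HasDerivAt f (f' x) x) (hf' : Tendsto f' (𝓝[>] a) (𝓝 μ)) :
    ∃ c, Tendsto f (𝓝[>] a) (𝓝 c) := by
  have hbdd : ∀ᶠ x in 𝓝[>] a, ‖f' x‖₊ ≤ ‖μ‖₊ + 1 :=
    hf'.nnnorm.eventually (eventually_le_nhds (lt_add_one _))
  obtain ⟨u, hu, hsub⟩ := mem_nhdsGT_iff_exists_Ioo_subset.1 (hf.and hbdd)
  have hlip : LipschitzOnWith (‖μ‖₊ + 1) f (Ioo a u) :=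
    (convex_Ioo a u).lipschitzOnWith_of_nnnorm_hasDerivWithin_le
      (fun x hx => (hsub hx).1.hasDerivWithinAt) (fun x hx => (hsub hx).2)
  obtain ⟨g, hg, hfg⟩ := hlip.extend_real
  refine ⟨g a, (hg.continuous.tendsto a).mono_left nhdsWithin_le_nhds |>.congr' ?_⟩
  filter_upwards [Ioo_mem_nhdsGT hu] with x hx using (hfg hx).symm

theorem tendsto_div_deriv_nhdsGT_zero {Ω : ℝ → ℝ} {a lam : ℝ}
    (hpos : ∀ᶠ x in 𝓝[>] a, 0 < Ω x) (hlim : Tendsto Ω (𝓝[>] a) (𝓝 0))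
    (hΩ : ∀ᶠ x in 𝓝[>] a, DifferentiableAt ℝ Ω x)
    (hΩ' : ∀ᶠ x in 𝓝[>] a, DifferentiableAt ℝ (deriv Ω) x)
    (hne : ∀ᶠ x in 𝓝[>] a, deriv Ω x ≠ 0)
    (hL : Tendsto (fun x => deriv (deriv Ω) x * Ω x / deriv Ω x ^ 2) (𝓝[>] a) (𝓝 lam)) :
    Tendsto (fun x => Ω x / deriv Ω x) (𝓝[>] a) (𝓝 0) := by
  have hderiv : ∀ᶠ x in 𝓝[>] a, HasDerivAt (fun y => Ω y / deriv Ω y)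
      (1 - deriv (deriv Ω) x * Ω x / deriv Ω x ^ 2) x := by
    filter_upwards [hΩ, hΩ', hne] with x hΩx hΩ'x hx
    refine (hΩx.hasDerivAt.div hΩ'x.hasDerivAt hx).congr_deriv ?_
    field_simp
  obtain ⟨c, hc⟩ := exists_tendsto_nhdsGT_of_hasDerivAt hderiv (tendsto_const_nhds.sub hL)
  suffices c = 0 from this ▸ hc
  by_contra hc0
  have hlog : ∀ᶠ x in 𝓝[>] a, HasDerivAt (fun y => log (Ω y)) (Ω x / deriv Ω x)⁻¹ x := by
    filter_upwards [hΩ, hpos] with x hΩx hx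
    rw [inv_div]
    exact hΩx.hasDerivAt.log hx.ne'
  obtain ⟨d, hd⟩ := exists_tendsto_nhdsGT_of_hasDerivAt hlog (hc.inv₀ hc0)
  have hΩ0 : Tendsto Ω (𝓝[>] a) (𝓝[>] 0) :=
    tendsto_nhdsWithin_of_tendsto_nhds_of_eventually_within _ hlim hpos
  exact not_tendsto_nhds_of_tendsto_atBot (tendsto_log_nhdsGT_zero.comp hΩ0) d hd

theorem deriv_deriv_mul {f g : ℝ → ℝ} {x : ℝ}
    (hf : ∀ᶠ y in 𝓝 x, DifferentiableAt ℝ f y) (hg : ∀ᶠ y in 𝓝 x, DifferentiableAt ℝ g y)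
    (hf' : DifferentiableAt ℝ (deriv f) x) (hg' : DifferentiableAt ℝ (deriv g) x) :
    deriv (deriv fun y => f y * g y) x =
      deriv (deriv f) x * g x + 2 * deriv f x * deriv g x + f x * deriv (deriv g) x := by
  have hfirst : deriv (fun y => f y * g y) =ᶠ[𝓝 x] fun y => deriv f y * g y + f y * deriv g y := by
    filter_upwards [hf, hg] with y hfy hgy using deriv_fun_mul hfy hgy
  rw [hfirst.deriv_eq]
  exact ((hf'.hasDerivAt.mul hg.self_of_nhds.hasDerivAt).add
    (hf.self_of_nhds.hasDerivAt.mul hg'.hasDerivAt)).deriv.trans (by ring)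

theorem mul_ratio_eq_of_ne_zero (h h' h'' Ω Ω' Ω'' : ℝ) (hΩ' : Ω' ≠ 0) :
    (h'' * Ω + 2 * h' * Ω' + h * Ω'') * (h * Ω) / (h' * Ω + h * Ω') ^ 2 =
      (h * h'' * (Ω / Ω') ^ 2 + 2 * h * h' * (Ω / Ω') + h ^ 2 * (Ω'' * Ω / Ω' ^ 2)) /
        (h' * (Ω / Ω') + h) ^ 2 := by
  rw [← div_div_div_cancel_right₀ (pow_ne_zero 2 hΩ')]
  congr 1 <;> field_simp

theorem tendsto_deriv_deriv_mul_mul_div_sq {h Ω : ℝ → ℝ} {a lam : ℝ}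
    (hh : ContDiff ℝ 2 h) (ha : h a ≠ 0)
    (hΩ : ∀ᶠ x in 𝓝[>] a, DifferentiableAt ℝ Ω x)
    (hΩ' : ∀ᶠ x in 𝓝[>] a, DifferentiableAt ℝ (deriv Ω) x)
    (hne : ∀ᶠ x in 𝓝[>] a, deriv Ω x ≠ 0)
    (hL : Tendsto (fun x => deriv (deriv Ω) x * Ω x / deriv Ω x ^ 2) (𝓝[>] a) (𝓝 lam))
    (hg : Tendsto (fun x => Ω x / deriv Ω x) (𝓝[>] a) (𝓝 0)) :
    Tendsto (fun x => deriv (deriv fun y => h y * Ω y) x * (h x * Ω x) /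
      deriv (fun y => h y * Ω y) x ^ 2) (𝓝[>] a) (𝓝 lam) := by
  obtain ⟨hh₁, -, hh'⟩ := (contDiff_succ_iff_deriv (n := 1)).1 hh
  obtain ⟨hh₂, -, hh''⟩ := (contDiff_succ_iff_deriv (n := 0)).1 hh'
  have hcont {φ : ℝ → ℝ} (hφ : Continuous φ) : Tendsto φ (𝓝[>] a) (𝓝 (φ a)) :=
    (hφ.tendsto a).mono_left nhdsWithin_le_nhds
  have h₀ := hcont hh₁.continuous
  have h₁ := hcont hh'.continuous
  have h₂ := hcont hh''.continuous
  have hlim := ((h₀.mul h₂).mul (hg.pow 2) |>.add (((h₀.const_mul 2).mul h₁).mul hg)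
    |>.add ((h₀.pow 2).mul hL)).div ((h₁.mul hg).add h₀ |>.pow 2) (by simpa using ha)
  refine (by simpa [ha] using hlim : Tendsto _ _ (𝓝 lam)).congr' ?_
  filter_upwards [(eventually_nhdsWithin_eventually_nhds_iff_of_isOpen isOpen_Ioi).2 hΩ, hΩ', hne]
    with x hΩx hΩ'x hx
  rw [deriv_deriv_mul (.of_forall hh₁) hΩx (hh₂ x) hΩ'x, deriv_fun_mul (hh₁ x) hΩx.self_of_nhds]
  exact (mul_ratio_eq_of_ne_zero _ _ _ _ _ _ hx).symm

theorem stmt_0_general (b : ℝ) (hb : 0 < b) (Ω : ℝ → ℝ) (lam : ℝ)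
    (hpos : ∀ T ∈ Set.Ioc 0 b, 0 < Ω T)
    (hcont : ContinuousOn Ω (Set.Icc 0 b))
    (hΩ0 : Ω 0 = 0)
    (hC3 : ContDiffOn ℝ 3 Ω (Set.Ioc 0 b))
    (hderiv_ne : ∀ᶠ T in 𝓝[>] (0:ℝ), deriv Ω T ≠ 0)
    (hL : Tendsto (fun T => deriv (deriv Ω) T * Ω T / (deriv Ω T) ^ 2)
      (𝓝[>] (0:ℝ)) (𝓝 lam))
    (k : ℝ → ℝ) (hk : ContDiff ℝ 3 k) :
    (fun T => Real.exp (k T) * Ω T) 0 = 0 ∧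
    ContinuousOn (fun T => Real.exp (k T) * Ω T) (Set.Icc 0 b) ∧
    ContDiffOn ℝ 3 (fun T => Real.exp (k T) * Ω T) (Set.Ioc 0 b) ∧
    (∀ T ∈ Set.Ioc 0 b, 0 < (fun T => Real.exp (k T) * Ω T) T) ∧
    Tendsto (fun T => deriv (deriv (fun T => Real.exp (k T) * Ω T)) T *
        (fun T => Real.exp (k T) * Ω T) T /
        (deriv (fun T => Real.exp (k T) * Ω T) T) ^ 2)
      (𝓝[>] (0:ℝ)) (𝓝 lam) := by
  have hexp : ContDiff ℝ 3 fun T => exp (k T) := hk.exp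
  refine ⟨by simp [hΩ0], hexp.continuous.continuousOn.mul hcont, hexp.contDiffOn.mul hC3,
    fun T hT => mul_pos (exp_pos _) (hpos T hT), ?_⟩
  have hIoo : Ioo 0 b ∈ 𝓝[>] (0 : ℝ) := Ioo_mem_nhdsGT hb
  have hΩ3 : ContDiffOn ℝ 3 Ω (Ioo 0 b) := hC3.mono Ioo_subset_Ioc_self
  have hΩ : ∀ᶠ T in 𝓝[>] (0 : ℝ), DifferentiableAt ℝ Ω T := by
    filter_upwards [hIoo] with T hT
    exact (hΩ3.differentiableOn (by norm_num)).differentiableAt (isOpen_Ioo.mem_nhds hT)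
  have hΩ' : ∀ᶠ T in 𝓝[>] (0 : ℝ), DifferentiableAt ℝ (deriv Ω) T := by
    filter_upwards [hIoo] with T hT
    exact ((hΩ3.deriv_of_isOpen isOpen_Ioo (m := 2) (by norm_num)).differentiableOn
      (by norm_num)).differentiableAt (isOpen_Ioo.mem_nhds hT)
  have hpos' : ∀ᶠ T in 𝓝[>] (0 : ℝ), 0 < Ω T := by
    filter_upwards [hIoo] with T hT using hpos T (Ioo_subset_Ioc_self hT)
  have hlim : Tendsto Ω (𝓝[>] 0) (𝓝 0) := by
    simpa [hΩ0] using ((hcont 0 ⟨le_rfl, hb.le⟩).mono_of_mem_nhdsWithin (Icc_mem_nhdsGT hb)).tendsto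
  exact tendsto_deriv_deriv_mul_mul_div_sq (hexp.of_le (by norm_num)) (exp_ne_zero _) hΩ hΩ'
    hderiv_ne hL (tendsto_div_deriv_nhdsGT_zero hpos' hlim hΩ hΩ' hderiv_ne hL)

theorem stmt_0 (b : ℝ) (hb : 0 < b) (Ω : ℝ → ℝ) (lam : ℝ)
    (hpos : ∀ T ∈ Set.Ioc 0 b, 0 < Ω T)
    (hcont : ContinuousOn Ω (Set.Icc 0 b))
    (hΩ0 : Ω 0 = 0)
    (hC3 : ContDiffOn ℝ 3 Ω (Set.Ioc 0 b))
    (hderiv_ne : ∀ᶠ T in 𝓝[>] (0:ℝ), deriv Ω T ≠ 0)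
    (hL : Tendsto (fun T => deriv (deriv Ω) T * Ω T / (deriv Ω T) ^ 2)
      (𝓝[>] (0:ℝ)) (𝓝 lam))
    (hlam : lam ≠ 1)
    (k : ℝ → ℝ) (hk : ContDiff ℝ 3 k) :
    (fun T => Real.exp (k T) * Ω T) 0 = 0 ∧
    ContinuousOn (fun T => Real.exp (k T) * Ω T) (Set.Icc 0 b) ∧
    ContDiffOn ℝ 3 (fun T => Real.exp (k T) * Ω T) (Set.Ioc 0 b) ∧
    (∀ T ∈ Set.Ioc 0 b, 0 < (fun T => Real.exp (k T) * Ω T) T) ∧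
    Tendsto (fun T => deriv (deriv (fun T => Real.exp (k T) * Ω T)) T *
        (fun T => Real.exp (k T) * Ω T) T /
        (deriv (fun T => Real.exp (k T) * Ω T) T) ^ 2)
      (𝓝[>] (0:ℝ)) (𝓝 lam) :=
  stmt_0_general b hb Ω lam hpos hcont hΩ0 hC3 hderiv_ne hL k hk
end

section
/- Let Ω : (0,b] → ℝ be C² with Ω > 0, Ω' > 0 on (0,b], Ω(T) → 0 as T → 0⁺, and suppose L(T) = Ω''(T)Ω(T)/(Ω'(T))² tends to a finite limit λ ≠ 1 as T → 0⁺. Then Ω(T)/Ω'(T) → 0 as T → 0⁺. -/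
open Real Filter Set Topology

/-!
The quotient `F = Ω / Ω'` has derivative `1 - L`, which is bounded below near `0` because `L`
has a finite limit. Since `F > 0`, adding a linear function makes `F` monotone and bounded below,
so `F` has a limit `l` at `0⁺`. If `l ≠ 0`, then `(log Ω)' = 1 / F` is bounded above near `0`, so
`log Ω` stays bounded below there, contradicting `Ω → 0`.
-/

theorem exists_tendsto_nhdsGT_of_le_deriv {f : ℝ → ℝ} {a B M : ℝ}
    (h : ∀ᶠ x in 𝓝[>] a, DifferentiableAt ℝ f x ∧ M ≤ deriv f x ∧ B ≤ f x) :
    ∃ l, Tendsto f (𝓝[>] a) (𝓝 l) := by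
  obtain ⟨b, hab, hsub⟩ := mem_nhdsGT_iff_exists_Ioo_subset.mp h
  set C := min M 0
  set g : ℝ → ℝ := fun x => f x - C * x
  have hdiff : DifferentiableOn ℝ f (Ioo a b) := fun x hx => (hsub hx).1.differentiableWithinAt
  have hmono : MonotoneOn g (Ioo a b) := by
    intro x hx y hy hxy
    have hslope := (convex_Ioo a b).mul_sub_le_image_sub_of_le_deriv hdiff.continuousOn
      (by rwa [interior_Ioo]) (C := C)
      (fun z hz => (min_le_left _ _).trans (hsub (interior_subset hz)).2.1) x hx y hy hxy
    simp only [g]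
    linarith
  have hbdd : BddBelow (g '' Ioo a b) := by
    refine ⟨B - C * a, ?_⟩
    rintro _ ⟨x, hx, rfl⟩
    have hC : C ≤ 0 := min_le_right _ _
    have hfx := (hsub hx).2.2
    simp only [g]
    nlinarith [hx.1]
  have hg := hmono.tendsto_nhdsWithin_Ioo_right (nonempty_Ioo.mpr hab) hbdd
  refine ⟨_, (hg.add (((continuous_const_mul C).tendsto a).mono_left nhdsWithin_le_nhds)).congr ?_⟩
  intro x
  simp [g]

theorem not_tendsto_atBot_nhdsGT_of_deriv_le {f : ℝ → ℝ} {a M : ℝ}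
    (h : ∀ᶠ x in 𝓝[>] a, DifferentiableAt ℝ f x ∧ deriv f x ≤ M) :
    ¬ Tendsto f (𝓝[>] a) atBot := by
  intro hbot
  obtain ⟨b, hab, hsub⟩ := mem_nhdsGT_iff_exists_Ioo_subset.mp h
  obtain ⟨c, hc⟩ := nonempty_Ioo.mpr (mem_Ioi.mp hab)
  have hdiff : DifferentiableOn ℝ f (Ioo a b) := fun x hx => (hsub hx).1.differentiableWithinAt
  have hlower : ∀ x ∈ Ioo a c, f c - max M 0 * (c - a) ≤ f x := by
    intro x hx
    have hxb : x ∈ Ioo a b := ⟨hx.1, hx.2.trans hc.2⟩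
    have hslope := (convex_Ioo a b).image_sub_le_mul_sub_of_deriv_le hdiff.continuousOn
      (by rwa [interior_Ioo]) (C := max M 0)
      (fun z hz => (hsub (interior_subset hz)).2.trans (le_max_left _ _)) x hxb c hc hx.2.le
    nlinarith [le_max_right M 0, hx.1]
  obtain ⟨x, hx, hfx⟩ := ((eventually_mem_set.mpr (Ioo_mem_nhdsGT hc.1)).and
    (hbot.eventually (eventually_lt_atBot (f c - max M 0 * (c - a))))).exists
  exact (hlower x hx).not_gt hfx

theorem hasDerivAt_div_deriv {f : ℝ → ℝ} {x : ℝ} (hf : DifferentiableAt ℝ f x)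
    (hf' : DifferentiableAt ℝ (deriv f) x) (h0 : deriv f x ≠ 0) :
    HasDerivAt (fun y => f y / deriv f y) (1 - deriv (deriv f) x * f x / deriv f x ^ 2) x := by
  refine (hf.hasDerivAt.fun_div hf'.hasDerivAt h0).congr_deriv ?_
  field_simp

theorem eq_zero_of_tendsto_div_deriv {f : ℝ → ℝ} {a l : ℝ}
    (hd : ∀ᶠ x in 𝓝[>] a, DifferentiableAt ℝ f x) (hf : Tendsto f (𝓝[>] a) (𝓝[>] 0))
    (hl : Tendsto (fun x => f x / deriv f x) (𝓝[>] a) (𝓝 l)) : l = 0 := by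
  by_contra hl0
  have hlog : Tendsto (fun x => deriv f x / f x) (𝓝[>] a) (𝓝 l⁻¹) := by
    simpa only [inv_div] using hl.inv₀ hl0
  refine not_tendsto_atBot_nhdsGT_of_deriv_le (f := fun x => log (f x)) (M := l⁻¹ + 1) ?_
    (tendsto_log_nhdsGT_zero.comp hf)
  filter_upwards [hd, hf.eventually self_mem_nhdsWithin,
    hlog.eventually (eventually_le_nhds (lt_add_one l⁻¹))] with x hdx hpos hle
  have hlogf := hdx.hasDerivAt.log (ne_of_gt hpos)
  exact ⟨hlogf.differentiableAt, hlogf.deriv ▸ hle⟩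

theorem stmt_1_general (b : ℝ) (hb : 0 < b) (Ω : ℝ → ℝ) (lam : ℝ)
    (hd1 : ∀ T ∈ Set.Ioc 0 b, DifferentiableAt ℝ Ω T)
    (hd2 : ∀ T ∈ Set.Ioc 0 b, DifferentiableAt ℝ (deriv Ω) T)
    (hpos : ∀ T ∈ Set.Ioc 0 b, 0 < Ω T)
    (hpos' : ∀ T ∈ Set.Ioc 0 b, 0 < deriv Ω T)
    (hΩ0 : Tendsto Ω (𝓝[>] (0:ℝ)) (𝓝 0))
    (hL : Tendsto (fun T => deriv (deriv Ω) T * Ω T / (deriv Ω T) ^ 2)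
      (𝓝[>] (0:ℝ)) (𝓝 lam)) :
    Tendsto (fun T => Ω T / deriv Ω T) (𝓝[>] (0:ℝ)) (𝓝 0) := by
  have hI : Ioc 0 b ∈ 𝓝[>] (0:ℝ) := Ioc_mem_nhdsGT hb
  obtain ⟨l, hl⟩ : ∃ l, Tendsto (fun T => Ω T / deriv Ω T) (𝓝[>] 0) (𝓝 l) := by
    refine exists_tendsto_nhdsGT_of_le_deriv (M := -lam) (B := 0) ?_
    filter_upwards [hI, hL.eventually (eventually_le_nhds (lt_add_one lam))] with T hT hLT
    have hF := hasDerivAt_div_deriv (hd1 T hT) (hd2 T hT) (hpos' T hT).ne'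
    exact ⟨hF.differentiableAt, by rw [hF.deriv]; linarith, (div_pos (hpos T hT) (hpos' T hT)).le⟩
  have hΩ : Tendsto Ω (𝓝[>] 0) (𝓝[>] 0) :=
    tendsto_nhdsWithin_iff.mpr ⟨hΩ0, by filter_upwards [hI] using hpos⟩
  rwa [eq_zero_of_tendsto_div_deriv (by filter_upwards [hI] using hd1) hΩ hl] at hl

theorem stmt_1 (b : ℝ) (hb : 0 < b) (Ω : ℝ → ℝ) (lam : ℝ)
    (hd1 : ∀ T ∈ Set.Ioc 0 b, DifferentiableAt ℝ Ω T)
    (hd2 : ∀ T ∈ Set.Ioc 0 b, DifferentiableAt ℝ (deriv Ω) T)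
    (hpos : ∀ T ∈ Set.Ioc 0 b, 0 < Ω T)
    (hpos' : ∀ T ∈ Set.Ioc 0 b, 0 < deriv Ω T)
    (hΩ0 : Tendsto Ω (𝓝[>] (0:ℝ)) (𝓝 0))
    (hL : Tendsto (fun T => deriv (deriv Ω) T * Ω T / (deriv Ω T) ^ 2)
      (𝓝[>] (0:ℝ)) (𝓝 lam))
    (hlam : lam ≠ 1) :
    Tendsto (fun T => Ω T / deriv Ω T) (𝓝[>] (0:ℝ)) (𝓝 0) :=
  stmt_1_general b hb Ω lam hd1 hd2 hpos hpos' hΩ0 hL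
end

section
/- Let μ, p, L : (0,b] → ℝ with μ(T) > 0 near 0, L(T) → -∞ as T → 0⁺, and p(T) = -(2/3)·L(T)·μ(T)·(1 + o(1)) as T → 0⁺. Then there exists δ ∈ (0,b] such that μ(T)+p(T) ≥ 0 and μ(T)+3p(T) ≥ 0 for all T ∈ (0,δ], but for every δ ∈ (0,b] there exists T ∈ (0,δ] with p(T) > μ(T). -/
/-! The factor `-(2/3) L (1 + ε)` tends to `+∞` as `T → 0⁺`, so `p ≥ 2μ` near the
singularity; together with `μ > 0` this gives `μ + p ≥ 0`, `μ + 3p ≥ 0` and `μ < p` on a whole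
interval `(0, δ]`. -/

open Real Filter Set Topology

section IocNhdsGT

variable {α : Type*} [TopologicalSpace α] [LinearOrder α] [OrderTopology α]
  [NoMaxOrder α] [DenselyOrdered α] {P : α → Prop} {a : α}

theorem Filter.Eventually.exists_Ioc_forall_of_nhdsGT {b : α} (h : ∀ᶠ x in 𝓝[>] a, P x)
    (hab : a < b) : ∃ δ, a < δ ∧ δ ≤ b ∧ ∀ x ∈ Ioc a δ, P x := by
  obtain ⟨u, hau, hsub⟩ := mem_nhdsGT_iff_exists_Ioc_subset.mp h
  exact ⟨min u b, lt_min hau hab, min_le_right u b,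
    fun x hx => hsub ⟨hx.1, hx.2.trans (min_le_left u b)⟩⟩

theorem Filter.Eventually.exists_mem_Ioc_of_nhdsGT {δ : α} (h : ∀ᶠ x in 𝓝[>] a, P x)
    (hδ : a < δ) : ∃ x ∈ Ioc a δ, P x :=
  (h.and (Ioc_mem_nhdsGT hδ)).exists.imp fun _ hx => ⟨hx.2, hx.1⟩

end IocNhdsGT

section PressureDensity

variable {ι : Type*} {l : Filter ι} {μ p L ε : ι → ℝ}

theorem tendsto_neg_two_thirds_mul_mul_one_add_atTop (hL : Tendsto L l atBot)
    (hε : Tendsto ε l (𝓝 0)) : Tendsto (fun T => -(2/3) * L T * (1 + ε T)) l atTop := by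
  have hfactor : Tendsto (fun T => 1 + ε T) l (𝓝 1) := by
    simpa using (tendsto_const_nhds (x := (1 : ℝ))).add hε
  exact (hL.const_mul_atBot_of_neg (by norm_num)).atTop_mul_pos one_pos hfactor

theorem eventually_const_mul_le_of_eq_neg_two_thirds_mul (hμ : ∀ᶠ T in l, 0 < μ T)
    (hL : Tendsto L l atBot) (hε : Tendsto ε l (𝓝 0))
    (hp : ∀ᶠ T in l, p T = -(2/3) * L T * μ T * (1 + ε T)) (C : ℝ) :
    ∀ᶠ T in l, C * μ T ≤ p T := by
  have hcoeff := (tendsto_neg_two_thirds_mul_mul_one_add_atTop hL hε).eventually_ge_atTop C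
  filter_upwards [hμ, hp, hcoeff] with T hμT hpT hCT
  calc C * μ T ≤ (-(2/3) * L T * (1 + ε T)) * μ T := mul_le_mul_of_nonneg_right hCT hμT.le
    _ = p T := by rw [hpT]; ring

end PressureDensity

theorem stmt_10 (b : ℝ) (hb : 0 < b) (μ p L : ℝ → ℝ)
    (hμpos : ∀ᶠ T in 𝓝[>] (0:ℝ), 0 < μ T)
    (hL : Tendsto L (𝓝[>] (0:ℝ)) atBot)
    (ε : ℝ → ℝ) (hε : Tendsto ε (𝓝[>] (0:ℝ)) (𝓝 0))
    (hp : ∀ᶠ T in 𝓝[>] (0:ℝ), p T = -(2/3) * L T * μ T * (1 + ε T)) :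
    (∃ δ, 0 < δ ∧ δ ≤ b ∧ ∀ T ∈ Set.Ioc 0 δ, 0 ≤ μ T + p T ∧ 0 ≤ μ T + 3 * p T) ∧
    (∀ δ, 0 < δ → δ ≤ b → ∃ T ∈ Set.Ioc (0:ℝ) δ, μ T < p T) := by
  have hconditions : ∀ᶠ T in 𝓝[>] (0:ℝ),
      (0 ≤ μ T + p T ∧ 0 ≤ μ T + 3 * p T) ∧ μ T < p T := by
    filter_upwards [hμpos, eventually_const_mul_le_of_eq_neg_two_thirds_mul hμpos hL hε hp 2]
      with T hμT hpT
    exact ⟨⟨by linarith, by linarith⟩, by linarith⟩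
  exact ⟨(hconditions.mono fun _ h => h.1).exists_Ioc_forall_of_nhdsGT hb,
    fun δ hδ _ => (hconditions.mono fun _ h => h.2).exists_mem_Ioc_of_nhdsGT hδ⟩
end
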